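/- Let W ≤ S_d be a permutation group and χ : W → U(K) a character. Assume K is an integral domain and |W| is invertible in K, and let E be a free K-module with basis (e_ℓ)_{ℓ∈L}. Let W act on the set L^d of multi-indices by (σi)_t = i_{σ⁻¹(t)}, let W_i denote the stabilizer of i ∈ L^d, choose one representative from each W-orbit in L^d, and let J(χ,T^d(E)) be the set of those chosen representatives j for which χ is trivial on W_j. Then the d-th semi-symmetric power [χ]^d(E) is a free K-module with basis (e_{j₁}χ⋯χe_{j_d})_{j∈J(χ,T^d(E))}. -/

import Mathlib

noncomputable section

open scoped TensorProduct

/-- The action of a permutation `σ` of `Fin d` on the `d`-th tensor power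
`T^d(E)`, determined by `σ • (x₁ ⊗ ⋯ ⊗ x_d) = x_{σ⁻¹(1)} ⊗ ⋯ ⊗ x_{σ⁻¹(d)}`. -/
def permAct (K : Type*) [CommRing K] (E : Type*) [AddCommGroup E] [Module K E]
    (d : ℕ) (σ : Equiv.Perm (Fin d)) :
    (⨂[K] (_ : Fin d), E) ≃ₗ[K] ⨂[K] (_ : Fin d), E :=
  PiTensorProduct.reindex K (fun _ : Fin d => E) σ

/-- The submodule `_{χ⁻¹}T^d(E)` of `T^d(E)` generated by the elements
`χ⁻¹(σ) z − σ z` for `σ ∈ W`; the quotient by it is the `d`-th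
semi-symmetric power `[χ]^d(E)` of weight `χ`. -/
def chiKer {K : Type*} [CommRing K] (E : Type*) [AddCommGroup E] [Module K E]
    {d : ℕ} (W : Subgroup (Equiv.Perm (Fin d))) (χ : W →* Kˣ) :
    Submodule K (⨂[K] (_ : Fin d), E) :=
  Submodule.span K {w | ∃ (σ : W) (z : ⨂[K] (_ : Fin d), E),
    w = (((χ σ)⁻¹ : Kˣ) : K) • z - permAct K E d (σ : Equiv.Perm (Fin d)) z}

/-- The `d`-th semi-symmetric power `[χ]^d(E) = T^d(E)/_{χ⁻¹}T^d(E)`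
of weight `χ` of the `K`-module `E`. -/
abbrev SemiPow {K : Type*} [CommRing K] (E : Type*) [AddCommGroup E] [Module K E]
    {d : ℕ} (W : Subgroup (Equiv.Perm (Fin d))) (χ : W →* Kˣ) :=
  (⨂[K] (_ : Fin d), E) ⧸ chiKer E W χ

/-- The decomposable `d-χ`-vector `x₁ χ ⋯ χ x_d`. -/
def semiMk {K : Type*} [CommRing K] {E : Type*} [AddCommGroup E] [Module K E]
    {d : ℕ} (W : Subgroup (Equiv.Perm (Fin d))) (χ : W →* Kˣ)
    (x : Fin d → E) : SemiPow E W χ :=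
  Submodule.Quotient.mk (PiTensorProduct.tprod K x)

/-!
The symmetriser `S z = ∑_{σ ∈ W} χ(σ) σ z` kills `_{χ⁻¹}T^d(E)`, satisfies
`S (σ z) = χ(σ)⁻¹ S z`, and `[S z] = |W| [z]` in the quotient. Since `[e_{σ i}] = χ(σ)⁻¹ [e_i]`,
the classes of the representatives span. If `σ` fixes `j` with `χ(σ) ≠ 1` then
`S e_j = χ(σ)⁻¹ S e_j` forces `S e_j = 0` (`T^d(E)` is free over a domain), so `[e_j] = 0` as `|W|`
is a unit. For distinct representatives `j, k`, the coefficient of `e_j` in `S e_k` is `0`, and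
for `j ∈ J(χ,T^d(E))` the coefficient of `e_j` in `S e_j` is `|W_j|`, a unit dividing `|W|`;
this gives linear independence.
-/

open PiTensorProduct MulAction

-- `(σ • i) t = i (σ⁻¹ t)`: the action of `W` on multi-indices.
attribute [local instance] arrowAction

theorem isUnit_natCard_subgroup {G R : Type*} [Group G] [Finite G] [CommSemiring R]
    (H : Subgroup G) (hG : IsUnit (Nat.card G : R)) : IsUnit (Nat.card H : R) :=
  isUnit_of_dvd_unit (Nat.cast_dvd_cast (Subgroup.card_subgroup_dvd_card H)) hG

section Symmetrize

variable {K : Type*} [CommRing K] {E : Type*} [AddCommGroup E] [Module K E] {d : ℕ}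
  (W : Subgroup (Equiv.Perm (Fin d))) (χ : W →* Kˣ)

theorem permAct_mul (σ τ : Equiv.Perm (Fin d)) (z : ⨂[K] (_ : Fin d), E) :
    permAct K E d (σ * τ) z = permAct K E d σ (permAct K E d τ z) :=
  (reindex_reindex τ σ z).symm

theorem mk_permAct (σ : W) (z : ⨂[K] (_ : Fin d), E) :
    (Submodule.Quotient.mk (permAct K E d σ z) : SemiPow E W χ)
      = (((χ σ)⁻¹ : Kˣ) : K) • Submodule.Quotient.mk z := by
  rw [← Submodule.Quotient.mk_smul, Submodule.Quotient.eq, ← neg_mem_iff, neg_sub]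
  exact Submodule.subset_span ⟨σ, z, rfl⟩

variable [Fintype W]

def symmetrize : (⨂[K] (_ : Fin d), E) →ₗ[K] ⨂[K] (_ : Fin d), E :=
  ∑ σ : W, ((χ σ : Kˣ) : K) • (permAct K E d σ).toLinearMap

theorem symmetrize_apply (z : ⨂[K] (_ : Fin d), E) :
    symmetrize W χ z = ∑ σ : W, ((χ σ : Kˣ) : K) • permAct K E d σ z := by
  simp [symmetrize, LinearMap.sum_apply]

theorem symmetrize_permAct (σ : W) (z : ⨂[K] (_ : Fin d), E) :
    symmetrize W χ (permAct K E d σ z) = (((χ σ)⁻¹ : Kˣ) : K) • symmetrize W χ z := by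
  rw [symmetrize_apply, symmetrize_apply, Finset.smul_sum]
  refine Fintype.sum_equiv (Equiv.mulRight σ) _ _ fun τ => ?_
  rw [← permAct_mul, smul_smul]
  simp only [Equiv.coe_mulRight, map_mul, Units.val_mul, Subgroup.coe_mul]
  rw [mul_left_comm, Units.inv_mul, mul_one]

theorem chiKer_le_ker_symmetrize : chiKer E W χ ≤ LinearMap.ker (symmetrize W χ) := by
  rw [chiKer, Submodule.span_le]
  rintro _ ⟨σ, z, rfl⟩
  simp [symmetrize_permAct]

theorem mk_symmetrize (z : ⨂[K] (_ : Fin d), E) :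
    (Submodule.Quotient.mk (symmetrize W χ z) : SemiPow E W χ)
      = (Fintype.card W : K) • Submodule.Quotient.mk z := by
  rw [symmetrize_apply, ← Submodule.mkQ_apply, map_sum]
  simp only [map_smul, Submodule.mkQ_apply, mk_permAct, smul_smul, Units.mul_inv, one_smul,
    Finset.sum_const, Finset.card_univ, Nat.cast_smul_eq_nsmul]

end Symmetrize

def tensorBasis {K : Type*} [CommRing K] {E : Type*} [AddCommGroup E] [Module K E]
    {L : Type*} (b : Module.Basis L K E) (d : ℕ) :
    Module.Basis (Fin d → L) K (⨂[K] (_ : Fin d), E) :=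
  Basis.piTensorProduct fun _ => b

section TensorBasis

variable {K : Type*} [CommRing K] {E : Type*} [AddCommGroup E] [Module K E] {d : ℕ}
  (W : Subgroup (Equiv.Perm (Fin d))) (χ : W →* Kˣ) {L : Type*} (b : Module.Basis L K E)

theorem tensorBasis_apply (i : Fin d → L) : tensorBasis b d i = tprod K fun t => b (i t) :=
  Basis.piTensorProduct_apply _ i

theorem permAct_tensorBasis (σ : W) (i : Fin d → L) :
    permAct K E d σ (tensorBasis b d i) = tensorBasis b d (σ • i) := by
  rw [tensorBasis_apply, tensorBasis_apply, permAct, reindex_tprod]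
  rfl

theorem mk_tensorBasis_smul (σ : W) (i : Fin d → L) :
    (Submodule.Quotient.mk (tensorBasis b d (σ • i)) : SemiPow E W χ)
      = (((χ σ)⁻¹ : Kˣ) : K) • Submodule.Quotient.mk (tensorBasis b d i) := by
  rw [← permAct_tensorBasis, mk_permAct]

variable [Fintype W]

theorem repr_symmetrize_tensorBasis [DecidableEq L] (i k : Fin d → L) :
    (tensorBasis b d).repr (symmetrize W χ (tensorBasis b d i)) k
      = ∑ σ : W, if σ • i = k then ((χ σ : Kˣ) : K) else 0 := by
  simp only [symmetrize_apply, map_sum, Finsupp.finsetSum_apply, map_smul, permAct_tensorBasis,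
    Module.Basis.repr_self, Finsupp.smul_apply, Finsupp.single_apply, smul_eq_mul, mul_ite,
    mul_one, mul_zero]

theorem repr_symmetrize_tensorBasis_of_notMem_orbit {i k : Fin d → L} (hk : k ∉ orbit W i) :
    (tensorBasis b d).repr (symmetrize W χ (tensorBasis b d i)) k = 0 := by
  classical
  rw [repr_symmetrize_tensorBasis]
  exact Finset.sum_eq_zero fun σ _ => if_neg fun h => hk ⟨σ, h⟩

theorem repr_symmetrize_tensorBasis_self {j : Fin d → L}
    (hj : ∀ σ : W, σ • j = j → χ σ = 1) :
    (tensorBasis b d).repr (symmetrize W χ (tensorBasis b d j)) j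
      = Nat.card (stabilizer W j) := by
  classical
  rw [repr_symmetrize_tensorBasis]
  calc ∑ σ : W, (if σ • j = j then ((χ σ : Kˣ) : K) else 0)
      = ∑ σ : W, if σ • j = j then 1 else 0 :=
        Finset.sum_congr rfl fun σ _ => by split_ifs with h <;> simp [hj σ, h]
    _ = Nat.card (stabilizer W j) := by
        simp [Finset.sum_boole, Nat.card_eq_fintype_card, Fintype.card_subtype,
          mem_stabilizer_iff]

theorem symmetrize_tensorBasis_eq_zero [IsDomain K] {j : Fin d → L} {σ : W}
    (hσ : σ • j = j) (hχ : χ σ ≠ 1) : symmetrize W χ (tensorBasis b d j) = 0 := by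
  have h := symmetrize_permAct W χ σ (tensorBasis b d j)
  rw [permAct_tensorBasis, hσ] at h
  have hχ' : (((χ σ)⁻¹ : Kˣ) : K) - 1 ≠ 0 := by simpa [sub_eq_zero] using hχ
  have : ((((χ σ)⁻¹ : Kˣ) : K) - 1) • symmetrize W χ (tensorBasis b d j) = 0 := by
    rw [sub_smul, ← h, one_smul, sub_self]
  exact ((tensorBasis b d).smul_eq_zero.mp this).resolve_left hχ'

theorem mk_tensorBasis_eq_zero [IsDomain K] (hcard : IsUnit (Nat.card W : K))
    {j : Fin d → L} {σ : W} (hσ : σ • j = j) (hχ : χ σ ≠ 1) :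
    (Submodule.Quotient.mk (tensorBasis b d j) : SemiPow E W χ) = 0 := by
  have h := mk_symmetrize W χ (tensorBasis b d j)
  rw [symmetrize_tensorBasis_eq_zero W χ b hσ hχ, Submodule.Quotient.mk_zero,
    ← Nat.card_eq_fintype_card] at h
  exact hcard.smul_eq_zero.mp h.symm

end TensorBasis

section SemiPowBasis

variable {K : Type*} [CommRing K] {E : Type*} [AddCommGroup E] [Module K E] {d : ℕ}
  (W : Subgroup (Equiv.Perm (Fin d))) (χ : W →* Kˣ) [Fintype W]
  (hcard : IsUnit (Nat.card W : K)) {L : Type*} (b : Module.Basis L K E) (R : Set (Fin d → L))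

include hcard in
/-- The functionals `z ↦ |W_j|⁻¹ · (coefficient of e_j in ∑_σ χ(σ) σ z)` vanish on
`_{χ⁻¹}T^d(E)` and are dual to the family. -/
theorem linearIndependent_mk_tensorBasis
    (hdisj : ∀ j ∈ R, ∀ k ∈ R, k ∈ orbit W j → k = j) :
    LinearIndependent K fun j : {j // j ∈ R ∧ ∀ σ : W, σ • j = j → χ σ = 1} =>
      (Submodule.Quotient.mk (tensorBasis b d j.1) : SemiPow E W χ) := by
  have hstab (j : Fin d → L) := isUnit_natCard_subgroup (stabilizer W j) hcard
  refine .of_pairwise_dual_eq_zero_one _ (fun j => (↑(hstab j.1).unit⁻¹ : K) •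
    ((tensorBasis b d).coord j.1 ∘ₗ
      (chiKer E W χ).liftQ (symmetrize W χ) (chiKer_le_ker_symmetrize W χ))) ?_ fun j => ?_
  · intro j k hjk
    have hj : j.1 ∉ orbit W k.1 := fun h => hjk (Subtype.ext (hdisj k.1 k.2.1 j.1 j.2.1 h))
    simp [repr_symmetrize_tensorBasis_of_notMem_orbit W χ b hj]
  · simp [repr_symmetrize_tensorBasis_self W χ b j.2.2]

include hcard in
theorem span_mk_tensorBasis_eq_top [IsDomain K] (hcover : ∀ i, ∃ j ∈ R, j ∈ orbit W i) :
    Submodule.span K (Set.range fun j : {j // j ∈ R ∧ ∀ σ : W, σ • j = j → χ σ = 1} =>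
      (Submodule.Quotient.mk (tensorBasis b d j.1) : SemiPow E W χ)) = ⊤ := by
  rw [eq_top_iff, ← (chiKer E W χ).range_mkQ, LinearMap.range_eq_map,
    ← (tensorBasis b d).span_eq, Submodule.map_span, Submodule.span_le]
  rintro _ ⟨_, ⟨i, rfl⟩, rfl⟩
  obtain ⟨j, hjR, σ, rfl⟩ := hcover i
  have hi : (chiKer E W χ).mkQ (tensorBasis b d i)
      = ((χ σ : Kˣ) : K) • Submodule.Quotient.mk (tensorBasis b d (σ • i)) := by
    rw [mk_tensorBasis_smul, smul_smul, Units.mul_inv, one_smul, Submodule.mkQ_apply]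
  rw [SetLike.mem_coe, hi]
  by_cases hJ : ∀ τ : W, τ • σ • i = σ • i → χ τ = 1
  · exact Submodule.smul_mem _ _ (Submodule.subset_span ⟨⟨σ • i, hjR, hJ⟩, rfl⟩)
  · push Not at hJ
    obtain ⟨τ, hτ, hχτ⟩ := hJ
    rw [mk_tensorBasis_eq_zero W χ b hcard hτ hχτ, smul_zero]
    exact Submodule.zero_mem _

def semiPowBasis [IsDomain K] (hdisj : ∀ j ∈ R, ∀ k ∈ R, k ∈ orbit W j → k = j)
    (hcover : ∀ i, ∃ j ∈ R, j ∈ orbit W i) :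
    Module.Basis {j // j ∈ R ∧ ∀ σ : W, σ • j = j → χ σ = 1} K (SemiPow E W χ) :=
  .mk (linearIndependent_mk_tensorBasis W χ hcard b R hdisj)
    (span_mk_tensorBasis_eq_top W χ hcard b R hcover).ge

theorem semiPowBasis_apply [IsDomain K] (hdisj : ∀ j ∈ R, ∀ k ∈ R, k ∈ orbit W j → k = j)
    (hcover : ∀ i, ∃ j ∈ R, j ∈ orbit W i)
    (j : {j // j ∈ R ∧ ∀ σ : W, σ • j = j → χ σ = 1}) :
    semiPowBasis W χ hcard b R hdisj hcover j = semiMk W χ fun t => b (j.1 t) := by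
  rw [semiPowBasis, Module.Basis.mk_apply, tensorBasis_apply, semiMk]

end SemiPowBasis

/-- Corollary II.7. Let `W ≤ S_d`, `χ : W → U(K)`, `K` an
integral domain, `|W| ∈ U(K)`, and `E` free with basis `(e_ℓ)_{ℓ ∈ L}`.
`W` acts on multi-indices `L^d` by `(σ i)_t = i_{σ⁻¹(t)}`; `R` is a chosen
set of representatives of the `W`-orbits, and `J(χ,T^d(E))` consists of the
chosen representatives `j` on whose stabilizer `χ` is trivial. Then
`[χ]^d(E)` is free with basis `(e_{j₁} χ ⋯ χ e_{j_d})_{j ∈ J(χ,T^d(E))}`. -/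
theorem semiPow_basis {K : Type*} [CommRing K] [IsDomain K]
    {E : Type*} [AddCommGroup E] [Module K E]
    {d : ℕ} (W : Subgroup (Equiv.Perm (Fin d))) (χ : W →* Kˣ)
    (hcard : IsUnit ((Nat.card W : K)))
    {L : Type*} (b : Module.Basis L K E)
    (R : Set (Fin d → L))
    (hR : ∀ i : Fin d → L, ∃! j, j ∈ R ∧
      ∃ σ : W, j = i ∘ ⇑(((σ : Equiv.Perm (Fin d)))⁻¹)) :
    ∃ B : Module.Basis {j : Fin d → L // j ∈ R ∧
        ∀ σ : W, j ∘ ⇑(((σ : Equiv.Perm (Fin d)))⁻¹) = j → χ σ = 1} K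
        (SemiPow E W χ),
      ∀ j, B j = semiMk W χ (fun t => b (j.1 t)) := by
  have hR' : ∀ i, ∃! j, j ∈ R ∧ j ∈ orbit W i := fun i => by
    have hRi : ∃! j, j ∈ R ∧ ∃ σ : W, j = σ • i := hR i
    simpa only [mem_orbit_iff, eq_comm] using hRi
  have hdisj : ∀ j ∈ R, ∀ k ∈ R, k ∈ orbit W j → k = j := fun j hj k hk hkj =>
    (hR' j).unique ⟨hk, hkj⟩ ⟨hj, mem_orbit_self j⟩
  have hcover : ∀ i, ∃ j ∈ R, j ∈ orbit W i := fun i => (hR' i).exists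
  have := Fintype.ofFinite W
  exact ⟨semiPowBasis W χ hcard b R hdisj hcover, semiPowBasis_apply W χ hcard b R hdisj hcover⟩
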